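/- Let k ≥ 1, σ ∈ Σ_k and t ∈ ℕ. Then stem(b^t·σ) = σ if and only if d^{j+1} divides c^j·t for every j with 0 ≤ j < k (this expresses that d divides c^j d^{-j} t for all j < k). In that case b^t·σ = σ·b^m, where m ∈ ℕ is determined by m·d^k = c^k·t. -/

import Mathlib

open scoped Classical

namespace BSpaper

/-- The single Baumslag–Solitar relator `a * b^c * (b^d * a)⁻¹` on two generators
(`true` plays the role of `a`, `false` the role of `b`). -/
def rels (c d : ℕ) : Set (FreeGroup Bool) :=
  {FreeGroup.of true * FreeGroup.of false ^ c * (FreeGroup.of false ^ d * FreeGroup.of true)⁻¹}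

/-- The Baumslag–Solitar group `BS(c,d) = ⟨a, b ∣ a b^c = b^d a⟩`. -/
abbrev Grp (c d : ℕ) := PresentedGroup (rels c d)

variable (c d : ℕ)

/-- The generator `a`. -/
def a : Grp c d := PresentedGroup.of true

/-- The generator `b`. -/
def b : Grp c d := PresentedGroup.of false

/-- The submonoid `P` of `BS(c,d)` generated by `a` and `b`. -/
def P : Submonoid (Grp c d) := Submonoid.closure {a c d, b c d}

/-- The word `b^{s₀} a b^{s₁} a ⋯ b^{s_{k-1}} a` associated to a list of digits `s_i < d`. -/
def wordStem : List (Fin d) → Grp c d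
  | [] => 1
  | i :: l => b c d ^ (i : ℕ) * a c d * wordStem l

/-- `Σ_k`: the set of stems of height `k`. -/
def SigmaSet (k : ℕ) : Set (Grp c d) :=
  {g | ∃ l : List (Fin d), l.length = k ∧ wordStem c d l = g}

/-- The data `(l, t)` of a normal-form decomposition `x = (b^{s₀} a ⋯ b^{s_{k-1}} a) * b^t`,
chosen by choice when it exists (it exists, uniquely, for every `x ∈ P`). -/
noncomputable def nf (x : Grp c d) : List (Fin d) × ℕ :=
  if h : ∃ p : List (Fin d) × ℕ, x = wordStem c d p.1 * b c d ^ p.2 then h.choose else ([], 0)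

/-- The stem of `x`, i.e. the stem part of the normal form of `x`. -/
noncomputable def stem (x : Grp c d) : Grp c d := wordStem c d (nf c d x).1

/-- The left-invariant partial order on `BS(c,d)`: `g ≤ h` iff `g⁻¹ * h ∈ P`. -/
def bsLe (g h : Grp c d) : Prop := g⁻¹ * h ∈ P c d

lemma a_mem_P : a c d ∈ P c d := Submonoid.subset_closure (Set.mem_insert _ _)

lemma b_mem_P : b c d ∈ P c d :=
  Submonoid.subset_closure (Set.mem_insert_of_mem _ rfl)

lemma wordStem_mem_P (l : List (Fin d)) : wordStem c d l ∈ P c d := by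
  induction l with
  | nil => exact one_mem _
  | cons i l ih =>
      exact mul_mem (mul_mem (pow_mem (b_mem_P c d) _) (a_mem_P c d)) ih

/-! Pushing `b^t` through a stem `b^{s₀} a ⋯ b^{s_{k-1}} a` digit by digit, using
`b^{dq} a = a b^{cq}`, rewrites `b^t σ` as a stem times a power of `b`: the new digit is
`(t + s₀) mod d` and the carry `c ⌊(t + s₀)/d⌋` moves on to the next digit. The stem is unchanged
exactly when every incoming carry is a multiple of `d`, which unwinds to `d^{j+1} ∣ c^j t`, and
then the final carry is `m = c^k t / d^k`. That this rewriting computes `stem` needs uniqueness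
of the normal form, which follows from Britton's lemma once `BS(c,d)` is mapped to the HNN
extension of `ℤ` along `cℤ ≅ dℤ`: a word all of whose stable letters are `t⁺¹` is reduced, and
distinct digits `0 ≤ s < d` lie in distinct cosets of `dℤ`. -/

end BSpaper

namespace HNNExtension

open NormalWord

variable {G : Type*} [Group G] {A B : Subgroup G} {φ : A ≃* B}

/-- All stable letters are `t⁺¹`, so no pinch `t^u g t^{-u}` can occur and the word is reduced. -/
def positiveWord : List G → G → ReducedWord G A B
  | [], g => ⟨g, [], List.isChain_nil⟩
  | x :: L, g => ⟨x, (L ++ [g]).map ((1 : ℤˣ), ·),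
      (List.pairwise_map.2 (List.pairwise_of_forall fun _ _ _ => rfl)).isChain⟩

lemma prod_map_t_mul_of_append (L : List G) (g : G) :
    ((L ++ [g]).map fun x => (t : HNNExtension G A B φ) * of x).prod =
      t * (L.map fun x => of x * t).prod * of g := by
  induction L with
  | nil => simp
  | cons x L ih =>
    simp only [List.cons_append, List.map_cons, List.prod_cons, ih]
    group

lemma prod_positiveWord (L : List G) (g : G) :
    (positiveWord L g : ReducedWord G A B).prod φ = (L.map fun x => of x * t).prod * of g := by
  cases L with
  | nil => simp [positiveWord, ReducedWord.prod]
  | cons x L =>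
    simp only [positiveWord, ReducedWord.prod, List.map_map, Function.comp_def, Units.val_one,
      zpow_one]
    rw [prod_map_t_mul_of_append]
    simp only [List.map_cons, List.prod_cons, mul_assoc]

lemma length_toList_positiveWord (L : List G) (g : G) :
    (positiveWord L g : ReducedWord G A B).toList.length = L.length := by
  cases L <;> simp [positiveWord]

variable (φ)

theorem length_eq_of_prod_map_mul_of_eq {L L' : List G} {g g' : G}
    (h : (L.map fun x => of x * t).prod * of g =
      ((L'.map fun x => of x * t).prod * of g' : HNNExtension G A B φ)) :
    L.length = L'.length := by
  rw [← prod_positiveWord, ← prod_positiveWord] at h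
  simpa [length_toList_positiveWord] using
    congrArg List.length (ReducedWord.map_fst_eq_and_of_prod_eq φ h).1

theorem inv_mul_mem_of_prod_map_mul_of_eq {x x' g g' : G} {L L' : List G}
    (h : ((x :: L).map fun x => of x * t).prod * of g =
      (((x' :: L').map fun x => of x * t).prod * of g' : HNNExtension G A B φ)) :
    x⁻¹ * x' ∈ B := by
  rw [← prod_positiveWord, ← prod_positiveWord] at h
  exact (ReducedWord.map_fst_eq_and_of_prod_eq φ h).2 1 (by simp [positiveWord])

theorem eq_of_prod_map_mul_of_eq {S : Set G} (hS : ∀ x ∈ S, ∀ y ∈ S, x⁻¹ * y ∈ B → x = y)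
    {L L' : List G} (hL : ∀ x ∈ L, x ∈ S) (hL' : ∀ x ∈ L', x ∈ S) {g g' : G}
    (h : (L.map fun x => of x * t).prod * of g =
      ((L'.map fun x => of x * t).prod * of g' : HNNExtension G A B φ)) :
    L = L' ∧ g = g' := by
  induction L generalizing L' with
  | nil =>
    obtain rfl : L' = [] := List.eq_nil_of_length_eq_zero
      (length_eq_of_prod_map_mul_of_eq φ h).symm
    simpa using of_injective φ (by simpa using h)
  | cons x L ih =>
    obtain _ | ⟨x', L'⟩ := L'
    · have hlen := length_eq_of_prod_map_mul_of_eq φ h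
      simp at hlen
    obtain rfl : x = x' := hS x (hL x (by simp)) x' (hL' x' (by simp))
      (inv_mul_mem_of_prod_map_mul_of_eq φ h)
    simp only [List.map_cons, List.prod_cons, mul_assoc, mul_right_inj] at h
    simpa using ih (fun y hy => hL y (by simp [hy])) (fun y hy => hL' y (by simp [hy])) h

end HNNExtension

namespace BSpaper

section Carry

variable (c d : ℕ)

lemma a_mul_b_pow : a c d * b c d ^ c = b c d ^ d * a c d :=
  PresentedGroup.mk_eq_mk_of_mul_inv_mem rfl

lemma b_pow_mul_a (q : ℕ) : b c d ^ (d * q) * a c d = a c d * b c d ^ (c * q) := by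
  rw [pow_mul, pow_mul]
  exact (SemiconjBy.pow_right (a_mul_b_pow c d) q).symm

def carry : ℕ → List (Fin d) → List (Fin d) × ℕ
  | t, [] => ([], t)
  | t, s :: l =>
      let p := carry (c * ((t + s) / d)) l
      (⟨(t + s) % d, Nat.mod_lt _ s.pos⟩ :: p.1, p.2)

lemma b_pow_mul_wordStem (t : ℕ) (l : List (Fin d)) :
    b c d ^ t * wordStem c d l = wordStem c d (carry c d t l).1 * b c d ^ (carry c d t l).2 := by
  induction l generalizing t with
  | nil => simp [carry, wordStem]
  | cons s l ih =>
    calc b c d ^ t * wordStem c d (s :: l)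
        = b c d ^ ((t + s) % d) * (b c d ^ (d * ((t + s) / d)) * a c d) * wordStem c d l := by
          rw [← mul_assoc (b c d ^ _), ← pow_add, Nat.mod_add_div]
          simp only [wordStem, pow_add]
          group
      _ = b c d ^ ((t + s) % d) * a c d * (b c d ^ (c * ((t + s) / d)) * wordStem c d l) := by
          rw [b_pow_mul_a]
          group
      _ = _ := by
          rw [ih]
          simp only [carry, wordStem]
          group

lemma forall_dvd_pow_mul_iff (hd : 0 < d) (k q : ℕ) :
    (∀ j < k + 1, d ^ (j + 1) ∣ c ^ j * (d * q)) ↔ ∀ j < k, d ^ (j + 1) ∣ c ^ j * (c * q) := by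
  have shift (j : ℕ) : c ^ (j + 1) * (d * q) = d * (c ^ j * (c * q)) := by ring
  constructor
  · intro h j hj
    have := h (j + 1) (by omega)
    rwa [shift, pow_succ' d, Nat.mul_dvd_mul_iff_left hd] at this
  · rintro h (_ | j) hj
    · simp
    · rw [shift, pow_succ' d]
      exact mul_dvd_mul_left d (h j (by omega))

lemma carry_fst_eq_iff (t : ℕ) (l : List (Fin d)) :
    (carry c d t l).1 = l ↔ ∀ j < l.length, d ^ (j + 1) ∣ c ^ j * t := by
  induction l generalizing t with
  | nil => simp [carry]
  | cons s l ih =>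
    have hd := s.pos
    by_cases hdt : d ∣ t
    · obtain ⟨q, rfl⟩ := hdt
      have hdiv : (d * q + s) / d = q := by
        rw [Nat.mul_add_div hd, Nat.div_eq_of_lt s.isLt, add_zero]
      have hmod : (d * q + s) % d = s := by
        rw [Nat.mul_add_mod, Nat.mod_eq_of_lt s.isLt]
      simp only [carry, List.cons.injEq, hdiv, hmod, List.length_cons, ih,
        forall_dvd_pow_mul_iff c d hd]
      simp
    · refine iff_of_false (fun h => hdt ?_) (fun h => hdt (by simpa using h 0 (by simp)))
      have hmod : (t + s) % d = s % d := by
        simpa [carry, Fin.ext_iff, Nat.mod_eq_of_lt s.isLt] using congrArg List.head? h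
      exact Nat.modEq_zero_iff_dvd.1
        (Nat.ModEq.add_right_cancel' s (by rw [zero_add]; exact hmod))

lemma b_pow_mul_wordStem_of_dvd {t m : ℕ} {l : List (Fin d)}
    (h : ∀ j < l.length, d ^ (j + 1) ∣ c ^ j * t) (hm : m * d ^ l.length = c ^ l.length * t) :
    b c d ^ t * wordStem c d l = wordStem c d l * b c d ^ m := by
  induction l generalizing t m with
  | nil => simp_all [wordStem]
  | cons s l ih =>
    have hd := s.pos
    obtain ⟨q, rfl⟩ : d ∣ t := by simpa using h 0 (by simp)
    have hm' : m * d ^ l.length = c ^ l.length * (c * q) := by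
      refine Nat.eq_of_mul_eq_mul_left hd ?_
      simp only [List.length_cons, pow_succ] at hm
      linarith
    calc b c d ^ (d * q) * wordStem c d (s :: l)
        = b c d ^ (s : ℕ) * (b c d ^ (d * q) * a c d) * wordStem c d l := by
          simp only [wordStem]
          group
      _ = b c d ^ (s : ℕ) * a c d * (b c d ^ (c * q) * wordStem c d l) := by
          rw [b_pow_mul_a]
          group
      _ = wordStem c d (s :: l) * b c d ^ m := by
          rw [ih ((forall_dvd_pow_mul_iff c d hd _ q).1 h) hm']
          simp only [wordStem]
          group

end Carry

section HNNModel

open HNNExtension Multiplicative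

def scale (n : ℤ) : Multiplicative ℤ →* Multiplicative ℤ :=
  (AddMonoidHom.mulLeft n).toMultiplicative

lemma scale_injective {n : ℤ} (hn : n ≠ 0) : Function.Injective (scale n) :=
  fun _ _ h => mul_right_injective₀ hn (congrArg toAdd h)

lemma ofAdd_mem_range_scale_iff {n m : ℤ} : ofAdd m ∈ (scale n).range ↔ n ∣ m :=
  ⟨fun ⟨y, hy⟩ => ⟨y.toAdd, (congrArg toAdd hy).symm⟩,
    fun ⟨y, hy⟩ => ⟨ofAdd y, by simp [scale, hy]⟩⟩

lemma eq_of_inv_mul_mem_range_scale {d : ℕ} {s s' : Fin d}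
    (h : (ofAdd ((s : ℕ) : ℤ))⁻¹ * ofAdd ((s' : ℕ) : ℤ) ∈ (scale d).range) : s = s' := by
  rw [← ofAdd_neg, ← ofAdd_add, neg_add_eq_sub, ofAdd_mem_range_scale_iff] at h
  exact Fin.ext ((Nat.modEq_iff_dvd.2 h).eq_of_lt_of_lt s.isLt s'.isLt)

variable {c d : ℕ} (hc : c ≠ 0) (hd : d ≠ 0)

noncomputable def hnnEquiv : (scale c).range ≃* (scale d).range :=
  (MonoidHom.ofInjective (scale_injective (Int.natCast_ne_zero.2 hc))).symm.trans
    (MonoidHom.ofInjective (scale_injective (Int.natCast_ne_zero.2 hd)))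

abbrev HNN := HNNExtension (Multiplicative ℤ) (scale c).range (scale d).range (hnnEquiv hc hd)

lemma t_mul_of_ofAdd : (t : HNN hc hd) * of (ofAdd (c : ℤ)) = of (ofAdd (d : ℤ)) * t := by
  let x := MonoidHom.ofInjective (scale_injective (Int.natCast_ne_zero.2 hc)) (ofAdd 1)
  have hx : (x : Multiplicative ℤ) = ofAdd (c : ℤ) := by
    rw [MonoidHom.ofInjective_apply]
    simp [scale]
  have hφx : (hnnEquiv hc hd x : Multiplicative ℤ) = ofAdd (d : ℤ) := by
    rw [hnnEquiv, MulEquiv.trans_apply, MulEquiv.symm_apply_apply, MonoidHom.ofInjective_apply]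
    simp [scale]
  rw [← hx, ← hφx]
  exact t_mul_of x

lemma of_ofAdd_one_pow (n : ℕ) : (of (ofAdd 1) : HNN hc hd) ^ n = of (ofAdd (n : ℤ)) := by
  rw [← map_pow HNNExtension.of, ← ofAdd_nsmul, nsmul_one]

noncomputable def toHNN : Grp c d →* HNN hc hd :=
  PresentedGroup.toGroup (f := fun x => cond x t (of (ofAdd 1))) (by
    rintro _ rfl
    simp only [map_mul, map_inv, map_pow, FreeGroup.lift_apply_of, cond_true, cond_false]
    rw [mul_inv_eq_one, of_ofAdd_one_pow, of_ofAdd_one_pow, t_mul_of_ofAdd])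

lemma toHNN_a : toHNN hc hd (a c d) = t := rfl

lemma toHNN_b_pow (n : ℕ) : toHNN hc hd (b c d ^ n) = of (ofAdd (n : ℤ)) := by
  rw [map_pow, ← of_ofAdd_one_pow]
  rfl

lemma toHNN_wordStem_mul_b_pow (l : List (Fin d)) (n : ℕ) :
    toHNN hc hd (wordStem c d l * b c d ^ n) =
      ((l.map fun s : Fin d => ofAdd ((s : ℕ) : ℤ)).map fun x => of x * t).prod *
        of (ofAdd (n : ℤ)) := by
  induction l with
  | nil => simpa [wordStem] using toHNN_b_pow hc hd n
  | cons s l ih =>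
    simp only [wordStem, mul_assoc, map_mul, toHNN_b_pow, toHNN_a, ih, List.map_cons,
      List.prod_cons]

end HNNModel

open HNNExtension Multiplicative in
theorem wordStem_mul_b_pow_injective {c d : ℕ} (hc : c ≠ 0) (hd : d ≠ 0) {l l' : List (Fin d)}
    {n n' : ℕ} (h : wordStem c d l * b c d ^ n = wordStem c d l' * b c d ^ n') :
    l = l' ∧ n = n' := by
  have h' := congrArg (toHNN hc hd) h
  rw [toHNN_wordStem_mul_b_pow, toHNN_wordStem_mul_b_pow] at h'
  obtain ⟨hl, hn⟩ := eq_of_prod_map_mul_of_eq (S := Set.range fun s : Fin d => ofAdd ((s : ℕ) : ℤ))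
    _ (by rintro _ ⟨s, rfl⟩ _ ⟨s', rfl⟩ hss'; rw [eq_of_inv_mul_mem_range_scale hss'])
    (by simp) (by simp) h'
  exact ⟨List.map_injective_iff.2 (fun s s' h => Fin.ext (by simpa using h)) hl, by simpa using hn⟩

theorem wordStem_injective {c d : ℕ} (hc : c ≠ 0) (hd : d ≠ 0) :
    Function.Injective (wordStem c d) := fun l l' h =>
  (wordStem_mul_b_pow_injective hc hd (n := 0) (n' := 0) (by rw [h])).1

theorem stem_wordStem_mul_b_pow {c d : ℕ} (hc : c ≠ 0) (hd : d ≠ 0) (l : List (Fin d)) (n : ℕ) :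
    stem c d (wordStem c d l * b c d ^ n) = wordStem c d l := by
  have hnf : ∃ p : List (Fin d) × ℕ, wordStem c d l * b c d ^ n = wordStem c d p.1 * b c d ^ p.2 :=
    ⟨(l, n), rfl⟩
  rw [stem, nf, dif_pos hnf, ← (wordStem_mul_b_pow_injective hc hd hnf.choose_spec).1]

theorem statement11_general (c d : ℕ) (hc : 0 < c) (hd : 0 < d)
    (k : ℕ) (l : List (Fin d)) (hl : l.length = k) (t : ℕ) :
    (stem c d (b c d ^ t * wordStem c d l) = wordStem c d l ↔
        ∀ j < k, d ^ (j + 1) ∣ c ^ j * t) ∧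
      ((∀ j < k, d ^ (j + 1) ∣ c ^ j * t) →
        ∀ m : ℕ, m * d ^ k = c ^ k * t →
          b c d ^ t * wordStem c d l = wordStem c d l * b c d ^ m) := by
  subst hl
  refine ⟨?_, fun h m hm => b_pow_mul_wordStem_of_dvd c d h hm⟩
  rw [b_pow_mul_wordStem, stem_wordStem_mul_b_pow hc.ne' hd.ne', ← carry_fst_eq_iff]
  exact (wordStem_injective hc.ne' hd.ne').eq_iff

/-- Let k ≥ 1, σ ∈ Σ_k (given by a digit string l of length k) and t ∈ ℕ.  Then
stem(b^t·σ) = σ if and only if d^(j+1) divides c^j·t for every j < k.  In that case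
b^t·σ = σ·b^m, where m is determined by m·d^k = c^k·t. -/
theorem statement11 (c d : ℕ) (hc : 0 < c) (hd : 0 < d)
    (k : ℕ) (hk : 1 ≤ k) (l : List (Fin d)) (hl : l.length = k) (t : ℕ) :
    (stem c d (b c d ^ t * wordStem c d l) = wordStem c d l ↔
        ∀ j < k, d ^ (j + 1) ∣ c ^ j * t) ∧
      ((∀ j < k, d ^ (j + 1) ∣ c ^ j * t) →
        ∀ m : ℕ, m * d ^ k = c ^ k * t →
          b c d ^ t * wordStem c d l = wordStem c d l * b c d ^ m) :=
  statement11_general c d hc hd k l hl t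

end BSpaper
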